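/- For a finitely generated group G, the natural surjections gr_q(G) → gr_q(G/G'') on lower central series quotients are isomorphisms for q ≤ 3; consequently θ_q(G) ≤ φ_q(G) with equality for q ≤ 3. -/

import Mathlib

open scoped TensorProduct

set_option maxHeartbeats 1000000
set_option synthInstance.maxHeartbeats 400000

noncomputable section

namespace ChenRanks

/-- The rank of a (finitely generated) group: the `ℚ`-dimension of its abelianization
tensored with `ℚ`. -/
def grpRank (G : Type*) [Group G] : ℕ :=
  Module.finrank ℚ (ℚ ⊗[ℤ] (Additive (Abelianization G)))

/-- The graded quotient `gr_q(G) = Γ_q(G)/Γ_{q+1}(G)` of the lower central series,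
with the classical indexing `Γ₁(G) = G` (Mathlib's `lowerCentralSeries G 0 = ⊤`). -/
abbrev grQuot (G : Type*) [Group G] (q : ℕ) : Type _ :=
  ↥(Subgroup.lowerCentralSeries (⊤ : Subgroup G) (q - 1)) ⧸
    ((Subgroup.lowerCentralSeries (⊤ : Subgroup G) q).subgroupOf (Subgroup.lowerCentralSeries (⊤ : Subgroup G) (q - 1)))

/-- The lower central series rank `φ_q(G) = rk Γ_q(G)/Γ_{q+1}(G)`. -/
def lcsRank (G : Type*) [Group G] (q : ℕ) : ℕ := grpRank (grQuot G q)

/-- The second derived subgroup `G'' = [[G,G],[G,G]]`. -/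
def doubleCommutator (G : Type*) [Group G] : Subgroup G :=
  ⁅(⁅(⊤ : Subgroup G), (⊤ : Subgroup G)⁆), (⁅(⊤ : Subgroup G), (⊤ : Subgroup G)⁆)⁆

instance (G : Type*) [Group G] : (doubleCommutator G).Normal := by
  unfold doubleCommutator; infer_instance

/-- The metabelian quotient `G/G''`. -/
abbrev Metab (G : Type*) [Group G] : Type _ := G ⧸ doubleCommutator G

/-- The Chen ranks `θ_q(G) = φ_q(G/G'')`. -/
def chenRank (G : Type*) [Group G] (q : ℕ) : ℕ := lcsRank (Metab G) q

/-- The natural homomorphism `gr_q(G) → gr_q(H)` induced by a group homomorphism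
`f : G → H`. -/
def grMap {G H : Type*} [Group G] [Group H] (f : G →* H) (q : ℕ) :
    grQuot G q →* grQuot H q :=
  QuotientGroup.lift _
    ((QuotientGroup.mk' ((Subgroup.lowerCentralSeries (⊤ : Subgroup H) q).subgroupOf
        (Subgroup.lowerCentralSeries (⊤ : Subgroup H) (q - 1)))).comp
      ((f.domRestrict (Subgroup.lowerCentralSeries (⊤ : Subgroup G) (q - 1))).codRestrict
        (Subgroup.lowerCentralSeries (⊤ : Subgroup H) (q - 1))
        (fun x => lowerCentralSeries.map f (q - 1) (Subgroup.mem_map.2 ⟨x.1, x.2, rfl⟩))))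
    (by
      intro x hx
      rw [MonoidHom.mem_ker, MonoidHom.comp_apply, ← MonoidHom.mem_ker,
        QuotientGroup.ker_mk']
      rw [Subgroup.mem_subgroupOf] at hx ⊢
      exact lowerCentralSeries.map f q (Subgroup.mem_map.2 ⟨x.1, hx, rfl⟩))

end ChenRanks

/-!
By the three subgroups lemma, `G'' = [[G, G], [G, G]] ≤ [[[G, G], G], G] = Γ₄(G)`. Hence for
`q ≤ 3` the kernel of `G → G/G''` lies in `Γ_{q+1}(G)`, which makes the surjection
`gr_q(G) → gr_q(G/G'')` injective. The rank inequality needs `gr_q(G)` to be finitely generated: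
modulo `Γ_{q+2}` the commutator `(a, x) ↦ [a, x]` is multiplicative in each variable on
`Γ_q × G`, so the commutators of generators of `Γ_q/Γ_{q+1}` with generators of `G` generate
`Γ_{q+1}/Γ_{q+2}`.
-/

namespace Subgroup

open scoped commutatorElement

variable {G H : Type*} [Group G] [Group H]

theorem map_lowerCentralSeries_of_surjective {f : G →* H} (hf : Function.Surjective f) (n : ℕ) :
    (lowerCentralSeries (⊤ : Subgroup G) n).map f = lowerCentralSeries ⊤ n := by
  rw [map_lowerCentralSeries, map_top_of_surjective f hf]

theorem lowerCentralSeries_quotient_le_center (n : ℕ) :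
    lowerCentralSeries (⊤ : Subgroup (G ⧸ lowerCentralSeries (⊤ : Subgroup G) (n + 1))) n ≤
      center _ := by
  rw [← commutator_top_right_eq_bot_iff_le_center, ← lowerCentralSeries_succ,
    ← map_lowerCentralSeries_of_surjective (QuotientGroup.mk'_surjective _), map_eq_bot_iff,
    QuotientGroup.ker_mk']

theorem commutator_commutator_le_of_rotate {H₁ H₂ H₃ N : Subgroup G} [N.Normal]
    (h1 : ⁅⁅H₂, H₃⁆, H₁⁆ ≤ N) (h2 : ⁅⁅H₃, H₁⁆, H₂⁆ ≤ N) : ⁅⁅H₁, H₂⁆, H₃⁆ ≤ N := by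
  simp only [← QuotientGroup.ker_mk' N, ← map_eq_bot_iff, map_commutator] at *
  exact commutator_commutator_eq_bot_of_rotate h1 h2

theorem commutatorElement_mul_right_of_mem_center {a b c : G} (h : ⁅a, c⁆ ∈ center G) :
    ⁅a, b * c⁆ = ⁅a, b⁆ * ⁅a, c⁆ := by
  rw [commutatorElement_mul_right_eq_mul_conj, mul_assoc ⁅a, b⁆, mem_center_iff.1 h b,
    ← mul_assoc, mul_inv_cancel_right]

theorem commutatorElement_mul_left_of_mem_center {a b c : G} (h : ⁅b, c⁆ ∈ center G) :
    ⁅a * b, c⁆ = ⁅b, c⁆ * ⁅a, c⁆ := by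
  rw [commutatorElement_mul_left_eq_conj_mul, mem_center_iff.1 h a, mul_inv_cancel_right]

theorem commutatorElement_inv_right_of_mem_center {a b : G} (h : ⁅a, b⁆ ∈ center G) :
    ⁅a, b⁻¹⁆ = ⁅a, b⁆⁻¹ := by
  rw [commutatorElement_inv_right, ← commutatorElement_inv,
    mem_center_iff.1 (inv_mem h) b⁻¹, inv_mul_cancel_right]

theorem commutatorElement_inv_left_of_mem_center {a b : G} (h : ⁅a, b⁆ ∈ center G) :
    ⁅a⁻¹, b⁆ = ⁅a, b⁆⁻¹ := by
  rw [commutatorElement_inv_left, ← commutatorElement_inv,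
    mem_center_iff.1 (inv_mem h) a⁻¹, inv_mul_cancel_right]

theorem commutator_closure_sup_le_closure_image2 {T S : Set G} {Z : Subgroup G}
    (hS : closure S = ⊤) (hZ : Z ≤ center G) (hcent : ⁅closure T ⊔ Z, ⊤⁆ ≤ center G) :
    ⁅closure T ⊔ Z, ⊤⁆ ≤ closure (Set.image2 (⁅·, ·⁆) T S) := by
  have hTZ : closure T ⊔ Z = closure (T ∪ Z) := by rw [closure_union, closure_eq]
  rw [hTZ] at hcent ⊢
  have central {a : G} (ha : a ∈ closure (T ∪ Z)) (x : G) : ⁅a, x⁆ ∈ center G :=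
    hcent (commutator_mem_commutator ha (mem_top x))
  have generator {t : G} (ht : t ∈ T) (x : G) : ⁅t, x⁆ ∈ closure (Set.image2 (⁅·, ·⁆) T S) := by
    have htTZ : t ∈ closure (T ∪ Z) := subset_closure (Or.inl ht)
    induction (hS ▸ mem_top x : x ∈ closure S) using closure_induction with
    | mem s hs => exact subset_closure (Set.mem_image2_of_mem ht hs)
    | one => rw [commutatorElement_one_right]; exact one_mem _
    | mul x y _ _ hx hy =>
      rw [commutatorElement_mul_right_of_mem_center (central htTZ y)]; exact mul_mem hx hy
    | inv x _ hx =>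
      rw [commutatorElement_inv_right_of_mem_center (central htTZ x)]; exact inv_mem hx
  rw [commutator_le]
  intro a ha x _
  induction ha using closure_induction with
  | mem a ha =>
    rcases ha with ha | ha
    · exact generator ha x
    · rw [commutatorElement_eq_one_iff_mul_comm.2 (mem_center_iff.1 (hZ ha) x).symm]
      exact one_mem _
  | one => rw [commutatorElement_one_left]; exact one_mem _
  | mul a b _ hb ha' hb' =>
    rw [commutatorElement_mul_left_of_mem_center (central hb x)]; exact mul_mem hb' ha'
  | inv a ha ha' => rw [commutatorElement_inv_left_of_mem_center (central ha x)]; exact inv_mem ha'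

theorem exists_finite_subset_lowerCentralSeries_le_closure_sup [hG : Group.FG G] (n : ℕ) :
    ∃ T : Set G, T.Finite ∧ T ⊆ (lowerCentralSeries (⊤ : Subgroup G) n : Set G) ∧
      lowerCentralSeries ⊤ n ≤ closure T ⊔ lowerCentralSeries ⊤ (n + 1) := by
  obtain ⟨S, hS, hSfin⟩ := Group.fg_iff.1 hG
  induction n with
  | zero => exact ⟨S, hSfin, fun x _ => mem_top x, by simp [hS]⟩
  | succ n ih =>
    obtain ⟨T, hTfin, hTsub, hTle⟩ := ih
    refine ⟨Set.image2 (⁅·, ·⁆) T S, hTfin.image2 _ hSfin, ?_, ?_⟩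
    · rintro _ ⟨t, ht, s, -, rfl⟩
      exact commutator_mem_commutator (hTsub ht) (mem_top s)
    set π := QuotientGroup.mk' (lowerCentralSeries (⊤ : Subgroup G) (n + 2))
    have hπ : Function.Surjective π := QuotientGroup.mk'_surjective _
    have hmap (k : ℕ) := map_lowerCentralSeries_of_surjective hπ k
    have hcenter := lowerCentralSeries_quotient_le_center (G := G) (n + 1)
    have hTQ : closure (π '' T) ⊔ lowerCentralSeries ⊤ (n + 1) ≤ lowerCentralSeries ⊤ n := by
      rw [← MonoidHom.map_closure, ← hmap, ← hmap]
      exact sup_le (map_mono (closure_le _ |>.2 hTsub))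
        (map_mono (lowerCentralSeries_antitone _ n.le_succ))
    have hQ : lowerCentralSeries ⊤ (n + 1) ≤ map π (closure (Set.image2 (⁅·, ·⁆) T S)) :=
      calc lowerCentralSeries ⊤ (n + 1)
          ≤ ⁅closure (π '' T) ⊔ lowerCentralSeries ⊤ (n + 1), ⊤⁆ := by
            refine commutator_mono ?_ le_rfl
            rw [← MonoidHom.map_closure, ← hmap, ← hmap, ← map_sup]
            exact map_mono hTle
        _ ≤ closure (Set.image2 (⁅·, ·⁆) (π '' T) (π '' S)) := by
            refine commutator_closure_sup_le_closure_image2 ?_ hcenter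
              ((commutator_mono hTQ le_rfl).trans hcenter)
            rw [← MonoidHom.map_closure, hS, map_top_of_surjective _ hπ]
        _ = map π (closure (Set.image2 (⁅·, ·⁆) T S)) := by
            rw [MonoidHom.map_closure, Set.image_image2_distrib (map_commutatorElement π)]
    calc lowerCentralSeries ⊤ (n + 1)
        ≤ comap π (map π (lowerCentralSeries ⊤ (n + 1))) := le_comap_map _ _
      _ ≤ comap π (map π (closure (Set.image2 (⁅·, ·⁆) T S))) := comap_mono (hmap _ ▸ hQ)
      _ = _ := by rw [comap_map_eq, QuotientGroup.ker_mk']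

theorem _root_.Group.fg_quotient_subgroupOf {H N : Subgroup G} [N.Normal] {T : Set G}
    (hT : T.Finite) (hTH : T ⊆ H) (hH : H ≤ closure T ⊔ N) : Group.FG (H ⧸ N.subgroupOf H) := by
  have hTH' : closure T ≤ H := (closure_le _).2 hTH
  have : Group.FG (closure T) := (Group.fg_iff_subgroup_fg _).2 ((fg_iff _).2 ⟨T, rfl, hT⟩)
  refine Group.fg_of_surjective (f := (QuotientGroup.mk' _).comp (inclusion hTH')) ?_
  rintro ⟨x, hx⟩
  obtain ⟨y, hy, z, hz, rfl⟩ := mem_sup_of_normal_right.1 (hH hx)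
  refine ⟨⟨y, hy⟩, QuotientGroup.eq.2 ?_⟩
  simpa [mem_subgroupOf] using hz

end Subgroup

namespace ChenRanks

theorem doubleCommutator_le_lowerCentralSeries_three (G : Type*) [Group G] :
    doubleCommutator G ≤ Subgroup.lowerCentralSeries (⊤ : Subgroup G) 3 :=
  Subgroup.commutator_commutator_le_of_rotate (by rw [Subgroup.commutator_comm ⊤]; rfl) le_rfl

theorem grQuot_fg (G : Type*) [Group G] [Group.FG G] (q : ℕ) : Group.FG (grQuot G q) := by
  obtain ⟨T, hTfin, hTsub, hTle⟩ :=
    Subgroup.exists_finite_subset_lowerCentralSeries_le_closure_sup (G := G) (q - 1)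
  exact Group.fg_quotient_subgroupOf hTfin hTsub
    (hTle.trans (sup_le_sup_left (Subgroup.lowerCentralSeries_antitone _ (by omega)) _))

theorem grpRank_le_of_surjective {A B : Type*} [Group A] [Group B] [Group.FG A] {f : A →* B}
    (hf : Function.Surjective f) : grpRank B ≤ grpRank A := by
  have : Group.FG (Abelianization A) :=
    Group.fg_of_surjective (f := Abelianization.of) QuotientGroup.mk_surjective
  have : Module.Finite ℤ (Additive (Abelianization A)) :=
    Module.Finite.iff_addGroup_fg.2 (GroupFG.iff_add_fg.1 this)
  have hab : Function.Surjective (Abelianization.map f) := by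
    intro b
    obtain ⟨a, rfl⟩ := QuotientGroup.mk_surjective b
    obtain ⟨x, rfl⟩ := hf a
    exact ⟨Abelianization.of x, rfl⟩
  exact LinearMap.finrank_le_finrank_of_surjective <| LinearMap.baseChange_surjective ℚ
    (g := (MonoidHom.toAdditive (Abelianization.map f)).toIntLinearMap) hab

theorem grpRank_congr {A B : Type*} [Group A] [Group B] (e : A ≃* B) : grpRank A = grpRank B :=
  ((MulEquiv.toAdditive e.abelianizationCongr).toIntLinearEquiv.baseChange ℤ ℚ _ _).finrank_eq

theorem grMap_mk {G H : Type*} [Group G] [Group H] (f : G →* H) (q : ℕ)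
    (x : Subgroup.lowerCentralSeries (⊤ : Subgroup G) (q - 1))
    (hfx : f x ∈ Subgroup.lowerCentralSeries (⊤ : Subgroup H) (q - 1)) :
    grMap f q (QuotientGroup.mk x) = QuotientGroup.mk ⟨f x, hfx⟩ :=
  rfl

theorem grMap_surjective {G H : Type*} [Group G] [Group H] {f : G →* H}
    (hf : Function.Surjective f) (q : ℕ) : Function.Surjective (grMap f q) := by
  intro b
  obtain ⟨⟨y, hy⟩, rfl⟩ := QuotientGroup.mk_surjective b
  rw [← Subgroup.map_lowerCentralSeries_of_surjective hf] at hy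
  obtain ⟨x, hx, rfl⟩ := hy
  exact ⟨QuotientGroup.mk ⟨x, hx⟩, rfl⟩

theorem grMap_injective_of_ker_le {G H : Type*} [Group G] [Group H] {f : G →* H}
    (hf : Function.Surjective f) {q : ℕ} (hker : f.ker ≤ Subgroup.lowerCentralSeries ⊤ q) :
    Function.Injective (grMap f q) := by
  rw [injective_iff_map_eq_one]
  intro a h
  obtain ⟨⟨x, hx⟩, rfl⟩ := QuotientGroup.mk_surjective a
  have hfx :=
    Subgroup.map_lowerCentralSeries_of_surjective hf (q - 1) ▸ Subgroup.mem_map_of_mem f hx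
  rw [grMap_mk f q _ hfx, QuotientGroup.eq_one_iff, Subgroup.mem_subgroupOf,
    ← Subgroup.map_lowerCentralSeries_of_surjective hf] at h
  obtain ⟨y, hy, hyx⟩ := h
  have hyx : y⁻¹ * x ∈ f.ker := by simp [hyx]
  rw [QuotientGroup.eq_one_iff, Subgroup.mem_subgroupOf]
  simpa using mul_mem hy (hker hyx)

theorem gr_metabelian_surjective_and_iso_low_degrees_general
    (G : Type*) [Group G] (hG : Group.FG G) (q : ℕ) :
    Function.Surjective (grMap (QuotientGroup.mk' (doubleCommutator G)) q) ∧
    (q ≤ 3 → Function.Bijective (grMap (QuotientGroup.mk' (doubleCommutator G)) q)) ∧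
    chenRank G q ≤ lcsRank G q ∧
    (q ≤ 3 → chenRank G q = lcsRank G q) := by
  have hπ := QuotientGroup.mk'_surjective (doubleCommutator G)
  have hsurj := grMap_surjective hπ q
  have hbij (hq : q ≤ 3) : Function.Bijective (grMap (QuotientGroup.mk' (doubleCommutator G)) q) :=
    ⟨grMap_injective_of_ker_le hπ <| by
      rw [QuotientGroup.ker_mk']
      exact (doubleCommutator_le_lowerCentralSeries_three G).trans
        (Subgroup.lowerCentralSeries_antitone _ hq), hsurj⟩
  have := grQuot_fg G q
  exact ⟨hsurj, hbij, grpRank_le_of_surjective hsurj,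
    fun hq => (grpRank_congr (MulEquiv.ofBijective _ (hbij hq))).symm⟩

/-- For a finitely generated group `G`, the natural surjections
`gr_q(G) → gr_q(G/G'')` are isomorphisms for `q ≤ 3`; consequently `θ_q(G) ≤ φ_q(G)`,
with equality for `q ≤ 3`. -/
theorem gr_metabelian_surjective_and_iso_low_degrees
    (G : Type*) [Group G] (hG : Group.FG G) (q : ℕ) (hq : 1 ≤ q) :
    Function.Surjective (grMap (QuotientGroup.mk' (doubleCommutator G)) q) ∧
    (q ≤ 3 → Function.Bijective (grMap (QuotientGroup.mk' (doubleCommutator G)) q)) ∧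
    chenRank G q ≤ lcsRank G q ∧
    (q ≤ 3 → chenRank G q = lcsRank G q) :=
  gr_metabelian_surjective_and_iso_low_degrees_general G hG q

end ChenRanks
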